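/- Let Z ⊂ ℝ^d be nonempty convex, ‖·‖ a norm on ℝ^d, and r : Z → ℝ a differentiable function whose Bregman divergence V_z(z') := r(z') − r(z) − ⟨∇r(z), z' − z⟩ satisfies V_z(z') ≥ ½‖z − z'‖² for all z, z' ∈ Z. Let g : Z → ℝ^d be monotone, let α ≥ β > 0 and q ∈ Z, and suppose w_α, w_β ∈ Z satisfy, for all u ∈ Z: ⟨g(w_α), w_α − u⟩ ≤ α·[V_q(u) − V_{w_α}(u) − V_q(w_α)] and ⟨g(w_β), w_β − u⟩ ≤ β·[V_q(u) − V_{w_β}(u) − V_q(w_β)]. Then V_q(w_α) ≤ V_q(w_β). -/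
import Mathlib


open RealInnerProductSpace

/-- Bregman divergence `V_z(z') = r(z') − r(z) − ⟨∇r(z), z' − z⟩` of a differentiable
function `r` with gradient map `gr`. -/
noncomputable def breg {d : ℕ} (r : EuclideanSpace ℝ (Fin d) → ℝ)
    (gr : EuclideanSpace ℝ (Fin d) → EuclideanSpace ℝ (Fin d))
    (z z' : EuclideanSpace ℝ (Fin d)) : ℝ :=
  r z' - r z - ⟪gr z, z' - z⟫

/-- Monotonicity of proximal mappings with respect to the regularization
level: if `w_α = prox_q^α(g)` and `w_β = prox_q^β(g)` with `α ≥ β > 0`, then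
`V_q(w_α) ≤ V_q(w_β)`.  Here `N` is an arbitrary norm on `ℝ^d` with respect to which
the distance-generating function `r` is 1-strongly convex. -/
theorem stmt12 {d : ℕ} (Z : Set (EuclideanSpace ℝ (Fin d)))
    (hZne : Z.Nonempty) (hZconv : Convex ℝ Z)
    (N : EuclideanSpace ℝ (Fin d) → ℝ)
    (hNzero : ∀ x, N x = 0 ↔ x = 0)
    (hNsmul : ∀ (a : ℝ) (x : EuclideanSpace ℝ (Fin d)), N (a • x) = |a| * N x)
    (hNadd : ∀ x y, N (x + y) ≤ N x + N y)
    (r : EuclideanSpace ℝ (Fin d) → ℝ)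
    (gr : EuclideanSpace ℝ (Fin d) → EuclideanSpace ℝ (Fin d))
    (hgr : ∀ z ∈ Z, HasGradientAt r (gr z) z)
    (hstrong : ∀ z ∈ Z, ∀ z' ∈ Z, 1 / 2 * N (z - z') ^ 2 ≤ breg r gr z z')
    (g : EuclideanSpace ℝ (Fin d) → EuclideanSpace ℝ (Fin d))
    (hmono : ∀ z ∈ Z, ∀ z' ∈ Z, 0 ≤ ⟪g z' - g z, z' - z⟫)
    (α β : ℝ) (hβ : 0 < β) (hβα : β ≤ α)
    (q : EuclideanSpace ℝ (Fin d)) (hq : q ∈ Z)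
    (wα wβ : EuclideanSpace ℝ (Fin d)) (hwα : wα ∈ Z) (hwβ : wβ ∈ Z)
    (hvarα : ∀ u ∈ Z, ⟪g wα, wα - u⟫ ≤ α * (breg r gr q u - breg r gr wα u - breg r gr q wα))
    (hvarβ : ∀ u ∈ Z, ⟪g wβ, wβ - u⟫ ≤ β * (breg r gr q u - breg r gr wβ u - breg r gr q wβ)) :
    breg r gr q wα ≤ breg r gr q wβ := by
  have h1 := hvarα wβ hwβ
  have h2 := hvarβ wα hwα
  have hm := hmono wβ hwβ wα hwα
  have hip : ⟪g wα - g wβ, wα - wβ⟫ = ⟪g wα, wα - wβ⟫ + ⟪g wβ, wβ - wα⟫ := by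
    rw [inner_sub_left, inner_sub_right, inner_sub_right, inner_sub_right]
    ring
  have hD1 : 0 ≤ breg r gr wα wβ :=
    le_trans (by positivity) (hstrong wα hwα wβ hwβ)
  have hD2 : 0 ≤ breg r gr wβ wα :=
    le_trans (by positivity) (hstrong wβ hwβ wα hwα)
  rcases eq_or_lt_of_le hβα with heq | hlt
  · -- α = β : the two points coincide
    subst heq
    have hD2' : breg r gr wβ wα ≤ 0 := by nlinarith
    have hs := hstrong wβ hwβ wα hwα
    have hN0 : N (wβ - wα) = 0 := by nlinarith [hNadd (wβ - wα) (-(wβ - wα)), hNsmul (-1) (wβ - wα), (hNzero 0).mpr rfl]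
    have : wβ - wα = 0 := (hNzero _).mp hN0
    have hwe : wα = wβ := by
      have := sub_eq_zero.mp this
      exact this.symm
    rw [hwe]
  · nlinarith [mul_nonneg (le_of_lt hβ) hD2, mul_nonneg (le_of_lt (lt_of_lt_of_le hβ hβα)) hD1]
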